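/- arXiv:1506.03883 — 2 statements merged into one kernel-verified Lean document; each statement's English description precedes it below -/
import Mathlib

section
/- Let G be a finite game graph with dynamic hierarchical information. For every player i: (a) the information-rank signal rank^i is information-consistent for player i, i.e., π ∼^i π' implies rank^i(π) = rank^i(π'); (b) there exists a Moore machine with input alphabet B^i that outputs rank^i(π) on input β^i(π) for every history π; and (c) for every player j, the relative-order signal ⪯^i_j (with ⪯^i_j(π) = 1 iff P^i(π) ⊆ P^j(π)) is likewise information-consistent for player i and is implemented by a Moore machine with input alphabet B^i reading β^i(π). -/
/-- A finite game graph for `n` players: positions `V` with initial position `init`,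
action sets `A i`, observation sets `B i`, a move relation labelled by action
profiles (with no dead ends), and observation functions. -/
structure GameGraph (n : ℕ) (V : Type) (A : Fin n → Type) (B : Fin n → Type) where
  init : V
  move : V → (∀ i, A i) → V → Prop
  noDeadEnd : ∀ v a, ∃ w, move v a w
  obs : ∀ i : Fin n, V → B i

/-- A Moore machine with finite state set `Q`, input alphabet `σ`, output alphabet `γ`. -/
structure Moore (σ γ : Type) where
  Q : Type
  finQ : Fintype Q
  q0 : Q
  δ : Q → σ → Q
  out : Q → γ

namespace Moore

/-- The output letter of a Moore machine after reading a word. -/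
def output {σ γ : Type} (mc : Moore σ γ) (w : List σ) : γ :=
  mc.out (w.foldl mc.δ mc.q0)

/-- The output word of a Moore machine along a word: the `k`-th letter is the
output after reading the prefix of length `k+1`. -/
def outWord {σ γ : Type} (mc : Moore σ γ) (w : List σ) : List γ :=
  ((w.scanl mc.δ mc.q0).drop 1).map mc.out

end Moore

/-- A deterministic parity automaton over alphabet `α`. -/
structure ParityAut (α : Type) where
  Q : Type
  finQ : Fintype Q
  q0 : Q
  δ : Q → α → Q
  prio : Q → ℕ

namespace ParityAut

/-- The run of a deterministic parity automaton on an infinite word. -/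
def run {α : Type} (d : ParityAut α) (f : ℕ → α) : ℕ → d.Q
  | 0 => d.q0
  | t + 1 => d.δ (run d f t) (f t)

/-- Parity acceptance: the least priority occurring infinitely often is even. -/
def Accepts {α : Type} (d : ParityAut α) (f : ℕ → α) : Prop :=
  Even (sInf { p | ∃ᶠ t in Filter.atTop, d.prio (d.run f t) = p })

end ParityAut

/-- A deterministic Büchi automaton over alphabet `α` with state set `σ`. -/
structure DetBuchi (α σ : Type) where
  q0 : σ
  δ : σ → α → σ
  accept : Set σ

namespace DetBuchi

/-- The run of a deterministic Büchi automaton on an infinite word. -/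
def run {α σ : Type} (d : DetBuchi α σ) (f : ℕ → α) : ℕ → σ
  | 0 => d.q0
  | t + 1 => d.δ (run d f t) (f t)

/-- Büchi acceptance: the run visits accepting states infinitely often. -/
def Accepts {α σ : Type} (d : DetBuchi α σ) (f : ℕ → α) : Prop :=
  ∃ᶠ t in Filter.atTop, d.run f t ∈ d.accept

end DetBuchi

namespace GameGraph

variable {n : ℕ} {V : Type} {A B : Fin n → Type}

/-- Two positions are linked by a move (for some action profile). -/
def step (G : GameGraph n V A B) (u w : V) : Prop := ∃ a, G.move u a w

/-- A history: a nonempty sequence starting at the initial position, each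
consecutive pair lying on a move. -/
def IsHistory (G : GameGraph n V A B) (π : List V) : Prop :=
  π.head? = some G.init ∧ π.Chain' G.step

/-- The observation sequence of player `i` along a history (the observation at
the initial position is discarded). -/
def obsSeq (G : GameGraph n V A B) (i : Fin n) (π : List V) : List (B i) :=
  (π.drop 1).map (G.obs i)

/-- Histories are indistinguishable for player `i` if they yield the same observations. -/
def Indist (G : GameGraph n V A B) (i : Fin n) (π π' : List V) : Prop :=
  G.obsSeq i π = G.obsSeq i π'

/-- The information set of player `i` at history `π`. -/
def InfoSet (G : GameGraph n V A B) (i : Fin n) (π : List V) : Set (List V) :=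
  { π' | G.IsHistory π' ∧ G.Indist i π π' }

/-- A history yields hierarchical information if the information sets of players
are totally ordered by inclusion. -/
def HistHI (G : GameGraph n V A B) (π : List V) : Prop :=
  ∀ i j : Fin n, G.InfoSet i π ⊆ G.InfoSet j π ∨ G.InfoSet j π ⊆ G.InfoSet i π

/-- Static hierarchical information: there is a total order of the players such
that along every history, the information sets respect this order. -/
def StaticHI (G : GameGraph n V A B) : Prop :=
  ∃ ord : Fin n → Fin n → Prop, IsLinearOrder (Fin n) ord ∧
    ∀ i j : Fin n, ord i j → ∀ π, G.IsHistory π → G.InfoSet i π ⊆ G.InfoSet j π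

/-- Hierarchical observation: there is a total order of the players such that
the observation of a smaller player determines that of a bigger player, positionally. -/
def HierObs (G : GameGraph n V A B) : Prop :=
  ∃ ord : Fin n → Fin n → Prop, IsLinearOrder (Fin n) ord ∧
    ∀ i j : Fin n, ord i j → ∀ v v' : V, G.obs i v = G.obs i v' → G.obs j v = G.obs j v'

/-- Dynamic hierarchical information: every history yields hierarchical information. -/
def DynamicHI (G : GameGraph n V A B) : Prop := ∀ π, G.IsHistory π → G.HistHI π

/-- The prefix `v₀ … v_t` of a play, as a list. -/
def playPrefix (f : ℕ → V) (t : ℕ) : List V := (List.range (t + 1)).map f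

/-- A play: an infinite sequence all of whose prefixes are histories. -/
def IsPlay (G : GameGraph n V A B) (f : ℕ → V) : Prop :=
  ∀ t, G.IsHistory (playPrefix f t)

/-- A play yields recurring hierarchical information if infinitely many of its
prefix histories yield hierarchical information. -/
def PlayRecurringHI (G : GameGraph n V A B) (f : ℕ → V) : Prop :=
  ∀ T, ∃ t, T ≤ t ∧ G.HistHI (playPrefix f t)

/-- A game yields recurring hierarchical information if every play does. -/
def RecurringHI (G : GameGraph n V A B) : Prop :=
  ∀ f, G.IsPlay f → G.PlayRecurringHI f

/-- `[t, t+ℓ]` is a gap of the play `f`: no prefix of length `r ∈ [t, t+ℓ]` yields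
hierarchical information.  The length of this gap is `ℓ + 1`. -/
def IsGap (G : GameGraph n V A B) (f : ℕ → V) (t ℓ : ℕ) : Prop :=
  ∀ r, t ≤ r → r ≤ t + ℓ → ¬ G.HistHI (playPrefix f r)

/-- Information-consistency of a strategy profile: each component is constant on
indistinguishability classes of histories. -/
def Consistent (G : GameGraph n V A B) (s : ∀ i, List V → A i) : Prop :=
  ∀ (i : Fin n) (π π' : List V),
    G.IsHistory π → G.IsHistory π' → G.Indist i π π' → s i π = s i π'

/-- A play follows a strategy profile. -/
def Follows (G : GameGraph n V A B) (s : ∀ i, List V → A i) (f : ℕ → V) : Prop :=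
  f 0 = G.init ∧ ∀ t, ∃ a, G.move (f t) a (f (t + 1)) ∧ ∀ i, a i = s i (playPrefix f t)

/-- A distributed winning strategy for winning condition `W`: an information-consistent
profile all of whose outcomes lie in `W`. -/
def WinningProfile (G : GameGraph n V A B) (W : Set (ℕ → V)) (s : ∀ i, List V → A i) : Prop :=
  G.Consistent s ∧ ∀ f, G.Follows s f → f ∈ W

/-- A finite-state strategy for player `i`: implemented by a Moore machine reading
the observation sequence of the history. -/
def FinStateStrategy (G : GameGraph n V A B) (i : Fin n) (si : List V → A i) : Prop :=
  ∃ mc : Moore (B i) (A i), ∀ π, G.IsHistory π → si π = mc.output (G.obsSeq i π)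

/-- The game admits a distributed winning strategy for `W`. -/
def HasDWS (G : GameGraph n V A B) (W : Set (ℕ → V)) : Prop :=
  ∃ s : ∀ i, List V → A i, G.WinningProfile W s

/-- The game admits a finite-state distributed winning strategy for `W`. -/
def HasFinDWS (G : GameGraph n V A B) (W : Set (ℕ → V)) : Prop :=
  ∃ s : ∀ i, List V → A i, G.WinningProfile W s ∧ ∀ i, G.FinStateStrategy i (s i)

/-- `i ⪯_π j` : at history `π`, player `i` is at least as informed as player `j`. -/
def infoLE (G : GameGraph n V A B) (π : List V) (i j : Fin n) : Prop :=
  G.InfoSet i π ⊆ G.InfoSet j π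

/-- The information rank of player `i` at history `π`: the number of players `j`
with `j ≺_π i`, or with `j < i` and `j ≈_π i`. -/
noncomputable def rank (G : GameGraph n V A B) (i : Fin n) (π : List V) : ℕ :=
  Nat.card {j : Fin n //
    (G.infoLE π j i ∧ ¬ G.infoLE π i j) ∨ (j < i ∧ G.infoLE π j i ∧ G.infoLE π i j)}

/-- The signal `λ_j^i`: the set of observations of player `i` at the last positions of
histories in the information set of player `j`. -/
def lam (G : GameGraph n V A B) (i j : Fin n) (π : List V) : Set (B i) :=
  { b | ∃ π', π' ∈ G.InfoSet j π ∧ ∃ v, π'.getLast? = some v ∧ G.obs i v = b }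

/-- Players `i` and `j` cross at stage `ℓ` of the play `f`. -/
def Crossing (G : GameGraph n V A B) (f : ℕ → V) (ℓ : ℕ) (i j : Fin n) : Prop :=
  G.InfoSet i (playPrefix f ℓ) ⊂ G.InfoSet j (playPrefix f ℓ) ∧
  G.InfoSet j (playPrefix f (ℓ + 1)) ⊂ G.InfoSet i (playPrefix f (ℓ + 1))

/-- A game is cross-free if no two players cross at any stage of any play. -/
def CrossFree (G : GameGraph n V A B) : Prop :=
  ∀ f, G.IsPlay f → ∀ (ℓ : ℕ) (i j : Fin n), ¬ G.Crossing f ℓ i j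

end GameGraph

/-!
Player `i` can maintain, from her own observations, the finite set of triples
`(last π₁, last π₂, {j | π₁ ∼ʲ π₂})` over all pairs of equal-length histories `π₁, π₂` such that
`π₁` produces her observation sequence so far. Appending a position to each history updates the
triple locally, so this set evolves by a deterministic transition on the new observation: it is
the state of a Moore machine (a subset construction over pairs of positions). At a history `π`,
`P^i(π) ⊆ P^j(π)` holds iff every recorded pair that `i` cannot distinguish is also
indistinguishable for `j`. Conversely, `P^j(π) ⊆ P^i(π)` holds iff every pair indistinguishable
for `j` is so for `i`; here dynamic hierarchical information is what transports the inclusion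
from `π` to the other histories of `P^i(π)`. These two relations determine the rank, and
information-consistency holds because the machines only read `β^i(π)`.
-/

theorem Moore.exists_output_eq {σ γ Q : Type} [Finite Q] (S : List σ → Q) (δ : Q → σ → Q)
    (hS : ∀ w b, S (w ++ [b]) = δ (S w) b) (out : Q → γ) :
    ∃ mc : Moore σ γ, ∀ w, mc.output w = out (S w) := by
  refine ⟨⟨Q, Fintype.ofFinite Q, S [], δ, out⟩, fun w => congrArg out ?_⟩
  induction w using List.reverseRecOn with
  | nil => rfl
  | append_singleton w b ih => simp only [List.foldl_append, List.foldl_cons, List.foldl_nil, ih, hS]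

namespace GameGraph

variable {n : ℕ} {V : Type} {A B : Fin n → Type} {G : GameGraph n V A B} {i j : Fin n}
  {π π' : List V}

theorem IsHistory.ne_nil (h : G.IsHistory π) : π ≠ [] := by
  rintro rfl
  simp [IsHistory] at h

theorem isHistory_iff : G.IsHistory π ↔ π.head? = some G.init ∧ π.IsChain G.step := Iff.rfl

theorem isHistory_concat (hπ : π ≠ []) (u : V) :
    G.IsHistory (π ++ [u]) ↔ G.IsHistory π ∧ G.step (π.getLastD G.init) u := by
  obtain ⟨π, v, rfl⟩ := List.eq_nil_or_concat π |>.resolve_left hπ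
  simp [isHistory_iff, List.head?_append, List.isChain_append, and_comm, and_left_comm]

theorem obsSeq_concat (hπ : π ≠ []) (u : V) :
    G.obsSeq i (π ++ [u]) = G.obsSeq i π ++ [G.obs i u] := by
  simp [obsSeq, List.drop_append_of_le_length (List.length_pos_iff.2 hπ)]

theorem indist_concat (hπ : π ≠ []) (hπ' : π' ≠ []) (u u' : V) :
    G.Indist j (π ++ [u]) (π' ++ [u']) ↔ G.Indist j π π' ∧ G.obs j u = G.obs j u' := by
  simp [Indist, obsSeq_concat hπ, obsSeq_concat hπ']

theorem infoSet_congr (h : G.Indist i π π') : G.InfoSet i π = G.InfoSet i π' := by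
  simp only [InfoSet, Indist] at h ⊢
  rw [h]

theorem Indist.length_eq (hi : G.Indist i π π') (hπ : G.IsHistory π) (hπ' : G.IsHistory π') :
    π.length = π'.length := by
  have := congrArg List.length hi
  simp only [obsSeq, List.length_map, List.length_drop] at this
  have := List.length_pos_iff.2 hπ.ne_nil
  have := List.length_pos_iff.2 hπ'.ne_nil
  omega

theorem DynamicHI.infoLE_of_indist (hG : G.DynamicHI) (hπ : G.IsHistory π)
    (hπ' : G.IsHistory π') (hi : G.Indist i π π') (h : G.infoLE π j i) : G.infoLE π' j i := by
  rcases hG π' hπ' j i with h' | h'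
  · exact h'
  · -- then `π ∼ʲ π'`, so the information sets of `i` and `j` at `π'` are those at `π`
    have hj : G.Indist j π π' := (h' ⟨hπ, hi.symm⟩).2.symm
    rwa [infoLE, ← infoSet_congr hi, ← infoSet_congr hj]

def summary (G : GameGraph n V A B) (π π' : List V) : V × V × Set (Fin n) :=
  (π.getLastD G.init, π'.getLastD G.init, {j | G.Indist j π π'})

-- Equal lengths make every pair of longer histories the one-step extension of a recorded pair.
def knowledge (G : GameGraph n V A B) (i : Fin n) (w : List (B i)) : Set (V × V × Set (Fin n)) :=
  {x | ∃ π π', G.IsHistory π ∧ G.IsHistory π' ∧ G.obsSeq i π = w ∧ π.length = π'.length ∧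
    G.summary π π' = x}

def knowledgeStep (G : GameGraph n V A B) (i : Fin n) (S : Set (V × V × Set (Fin n))) (b : B i) :
    Set (V × V × Set (Fin n)) :=
  {y | ∃ x ∈ S, G.step x.1 y.1 ∧ G.step x.2.1 y.2.1 ∧ G.obs i y.1 = b ∧
    y.2.2 = {j | j ∈ x.2.2 ∧ G.obs j y.1 = G.obs j y.2.1}}

theorem summary_concat (hπ : π ≠ []) (hπ' : π' ≠ []) (u u' : V) :
    G.summary (π ++ [u]) (π' ++ [u']) =
      (u, u', {j | j ∈ (G.summary π π').2.2 ∧ G.obs j u = G.obs j u'}) := by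
  simp [summary, indist_concat hπ hπ']

theorem exists_eq_concat_of_obsSeq_eq_concat {w : List (B i)} {b : B i}
    (h : G.obsSeq i π = w ++ [b]) : ∃ ρ u, ρ ≠ [] ∧ π = ρ ++ [u] := by
  have hlen : π.length = w.length + 2 := by
    have := congrArg List.length h
    simp only [obsSeq, List.length_map, List.length_drop, List.length_append,
      List.length_singleton] at this
    omega
  obtain ⟨ρ, u, rfl⟩ := List.eq_nil_or_concat π |>.resolve_left (by rintro rfl; simp at hlen)
  refine ⟨ρ, u, ?_, by simp⟩
  rintro rfl
  simp at hlen

theorem knowledge_concat (w : List (B i)) (b : B i) :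
    G.knowledge i (w ++ [b]) = G.knowledgeStep i (G.knowledge i w) b := by
  ext y
  constructor
  · rintro ⟨σ, σ', hσ, hσ', hobs, hlen, rfl⟩
    obtain ⟨π, u, hπ, rfl⟩ := exists_eq_concat_of_obsSeq_eq_concat hobs
    obtain ⟨π', u', hπ', rfl⟩ : ∃ π' u', π' ≠ [] ∧ σ' = π' ++ [u'] := by
      obtain ⟨π', u', rfl⟩ := List.eq_nil_or_concat σ' |>.resolve_left hσ'.ne_nil
      exact ⟨π', u', by rintro rfl; simp [hπ] at hlen, by simp⟩
    rw [isHistory_concat hπ] at hσ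
    rw [isHistory_concat hπ'] at hσ'
    obtain ⟨hobs, hb⟩ : G.obsSeq i π = w ∧ G.obs i u = b := by
      simpa [obsSeq_concat hπ] using hobs
    refine ⟨G.summary π π', ⟨π, π', hσ.1, hσ'.1, hobs, by simpa using hlen, rfl⟩, ?_⟩
    rw [summary_concat hπ hπ']
    exact ⟨hσ.2, hσ'.2, hb, rfl⟩
  · rintro ⟨_, ⟨π, π', hπ, hπ', rfl, hlen, rfl⟩, hstep, hstep', rfl, hy⟩
    refine ⟨π ++ [y.1], π' ++ [y.2.1], (isHistory_concat hπ.ne_nil _).2 ⟨hπ, hstep⟩,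
      (isHistory_concat hπ'.ne_nil _).2 ⟨hπ', hstep'⟩, obsSeq_concat hπ.ne_nil _,
      by simp [hlen], ?_⟩
    rw [summary_concat hπ.ne_nil hπ'.ne_nil, ← hy]

def IndistImp (S : Set (V × V × Set (Fin n))) (a b : Fin n) : Prop :=
  ∀ x ∈ S, a ∈ x.2.2 → b ∈ x.2.2

theorem infoLE_iff_indistImp (hπ : G.IsHistory π) :
    G.infoLE π i j ↔ IndistImp (G.knowledge i (G.obsSeq i π)) i j := by
  constructor
  · rintro h _ ⟨π₁, π₂, h₁, h₂, hobs, -, rfl⟩ (hi : G.Indist i π₁ π₂)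
    have hm₁ : π₁ ∈ G.InfoSet i π := ⟨h₁, hobs.symm⟩
    have hm₂ : π₂ ∈ G.InfoSet i π := ⟨h₂, hobs.symm.trans hi⟩
    exact (h hm₁).2.symm.trans (h hm₂).2
  · rintro h π' ⟨hπ', hi⟩
    exact ⟨hπ', h _ ⟨π, π', hπ, hπ', rfl, hi.length_eq hπ hπ', rfl⟩ hi⟩

theorem DynamicHI.infoLE_iff_indistImp (hG : G.DynamicHI) (hπ : G.IsHistory π) :
    G.infoLE π j i ↔ IndistImp (G.knowledge i (G.obsSeq i π)) j i := by
  constructor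
  · rintro h _ ⟨π₁, π₂, h₁, h₂, hobs, -, rfl⟩ hj
    exact (hG.infoLE_of_indist hπ h₁ hobs.symm h ⟨h₂, hj⟩).2
  · rintro h π' ⟨hπ', hj⟩
    exact ⟨hπ', h _ ⟨π, π', hπ, hπ', rfl, hj.length_eq hπ hπ', rfl⟩ hj⟩

theorem rank_eq_card (R : Fin n → Fin n → Prop) (hle : ∀ j, G.infoLE π i j ↔ R i j)
    (hge : ∀ j, G.infoLE π j i ↔ R j i) :
    G.rank i π = Nat.card {j // (R j i ∧ ¬ R i j) ∨ (j < i ∧ R j i ∧ R i j)} :=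
  Nat.card_congr <| Equiv.subtypeEquivRight fun j => by rw [hle, hge]

theorem DynamicHI.exists_moore_rank [Finite V] (hG : G.DynamicHI) (i : Fin n) :
    ∃ mc : Moore (B i) ℕ, ∀ π, G.IsHistory π → mc.output (G.obsSeq i π) = G.rank i π := by
  obtain ⟨mc, hmc⟩ := Moore.exists_output_eq (G.knowledge i) (G.knowledgeStep i)
    G.knowledge_concat fun S => Nat.card {j // (IndistImp S j i ∧ ¬ IndistImp S i j) ∨
      (j < i ∧ IndistImp S j i ∧ IndistImp S i j)}
  refine ⟨mc, fun π hπ => ?_⟩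
  rw [hmc, rank_eq_card _ (fun j => GameGraph.infoLE_iff_indistImp hπ)
    (fun j => hG.infoLE_iff_indistImp hπ)]

open Classical in
theorem exists_moore_infoLE [Finite V] (G : GameGraph n V A B) (i j : Fin n) :
    ∃ mc : Moore (B i) Bool, ∀ π, G.IsHistory π →
      (mc.output (G.obsSeq i π) = true ↔ G.infoLE π i j) := by
  obtain ⟨mc, hmc⟩ := Moore.exists_output_eq (G.knowledge i) (G.knowledgeStep i)
    G.knowledge_concat fun S => decide (IndistImp S i j)
  exact ⟨mc, fun π hπ => by rw [hmc, decide_eq_true_iff, infoLE_iff_indistImp hπ]⟩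

end GameGraph

theorem statement8_general {n : ℕ} {V : Type} {A B : Fin n → Type}
    [Fintype V]
    (G : GameGraph n V A B) (hG : G.DynamicHI) (i : Fin n) :
    (∀ π π', G.IsHistory π → G.IsHistory π' → G.Indist i π π' → G.rank i π = G.rank i π') ∧
    (∃ mc : Moore (B i) ℕ, ∀ π, G.IsHistory π → mc.output (G.obsSeq i π) = G.rank i π) ∧
    (∀ j : Fin n,
      (∀ π π', G.IsHistory π → G.IsHistory π' → G.Indist i π π' →
        (G.infoLE π i j ↔ G.infoLE π' i j)) ∧
      (∃ mc : Moore (B i) Bool, ∀ π, G.IsHistory π →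
        (mc.output (G.obsSeq i π) = true ↔ G.infoLE π i j))) := by
  obtain ⟨rankMachine, hrank⟩ := hG.exists_moore_rank i
  refine ⟨fun π π' h h' hi => ?_, ⟨rankMachine, hrank⟩, fun j => ?_⟩
  · rw [← hrank π h, ← hrank π' h', show G.obsSeq i π = G.obsSeq i π' from hi]
  · obtain ⟨mc, hmc⟩ := G.exists_moore_infoLE i j
    refine ⟨fun π π' h h' hi => ?_, mc, hmc⟩
    rw [← hmc π h, ← hmc π' h', show G.obsSeq i π = G.obsSeq i π' from hi]

/-- In a finite game graph with dynamic hierarchical information, for every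
player `i`: (a) the rank signal is information-consistent for `i`; (b) it is implemented by a
Moore machine reading the observations of `i`; (c) for every player `j`, the relative-order
signal `⪯^i_j` is information-consistent for `i` and implemented by a Moore machine reading
the observations of `i`. -/
theorem statement8 {n : ℕ} {V : Type} {A B : Fin n → Type}
    [Fintype V] [∀ i, Fintype (A i)] [∀ i, Fintype (B i)]
    (G : GameGraph n V A B) (hG : G.DynamicHI) (i : Fin n) :
    (∀ π π', G.IsHistory π → G.IsHistory π' → G.Indist i π π' → G.rank i π = G.rank i π') ∧
    (∃ mc : Moore (B i) ℕ, ∀ π, G.IsHistory π → mc.output (G.obsSeq i π) = G.rank i π) ∧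
    (∀ j : Fin n,
      (∀ π π', G.IsHistory π → G.IsHistory π' → G.Indist i π π' →
        (G.infoLE π i j ↔ G.infoLE π' i j)) ∧
      (∃ mc : Moore (B i) Bool, ∀ π, G.IsHistory π →
        (mc.output (G.obsSeq i π) = true ↔ G.infoLE π i j))) :=
  statement8_general G hG i
end

section
/- For every finite game graph G with n players and |V| positions, there exists a deterministic Büchi automaton over alphabet V with at most |V|·2^{2n²|V|²} states such that, for every infinite word π ∈ V^ω that is a play of G, the automaton accepts π if and only if the play π yields recurring hierarchical information. -/
/-!
A player's information set after `π ++ [w]` consists of the one-step extensions of the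
histories in his information set after `π` that end in a position he cannot tell apart
from `w`. Hence, for every pair of players `i, j`, the finite set of pairs
(last position `v`, whether the history is also in `j`'s information set) over the histories
in `i`'s information set is updated deterministically letter by letter, and it determines
whether `Iᵢ(π) ⊆ Iⱼ(π)`. A deterministic automaton tracking these `n²` subsets of `V × Bool`
recognises hierarchical information at every prefix, so as a Büchi automaton it accepts
exactly the plays yielding recurring hierarchical information.
-/

namespace DetBuchi

variable {α σ τ : Type}

lemma accepts_iff_frequently_run_succ (d : DetBuchi α σ) (f : ℕ → α) :
    d.Accepts f ↔ ∃ᶠ t in Filter.atTop, d.run f (t + 1) ∈ d.accept := by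
  rw [Accepts]
  conv_lhs => rw [← Filter.map_add_atTop_eq_nat 1]
  rfl

def mapEquiv (e : σ ≃ τ) (d : DetBuchi α σ) : DetBuchi α τ where
  q0 := e d.q0
  δ q a := e (d.δ (e.symm q) a)
  accept := e.symm ⁻¹' d.accept

lemma run_mapEquiv (e : σ ≃ τ) (d : DetBuchi α σ) (f : ℕ → α) (t : ℕ) :
    (d.mapEquiv e).run f t = e (d.run f t) := by
  induction t with
  | zero => rfl
  | succ t ih =>
    change e (d.δ (e.symm ((d.mapEquiv e).run f t)) (f t)) = _
    rw [ih, Equiv.symm_apply_apply]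
    rfl

lemma accepts_mapEquiv (e : σ ≃ τ) (d : DetBuchi α σ) (f : ℕ → α) :
    (d.mapEquiv e).Accepts f ↔ d.Accepts f := by
  simp only [Accepts, run_mapEquiv]
  simp only [mapEquiv, Set.mem_preimage, Equiv.symm_apply_apply]

end DetBuchi

namespace GameGraph

variable {n : ℕ} {V : Type} {A B : Fin n → Type}

lemma IsHistory.ne_nil_s12 {G : GameGraph n V A B} {π : List V} (h : G.IsHistory π) : π ≠ [] := by
  rintro rfl
  simp [IsHistory] at h

lemma Indist.length_eq_s12 {G : GameGraph n V A B} {i : Fin n} {π π' : List V}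
    (h : G.Indist i π π') : π.length - 1 = π'.length - 1 := by
  simpa [obsSeq] using congrArg List.length h

variable (G : GameGraph n V A B)

lemma isHistory_append_singleton_iff {π : List V} (hπ : π ≠ []) (w : V) :
    G.IsHistory (π ++ [w]) ↔ G.IsHistory π ∧ ∀ v ∈ π.getLast?, G.step v w := by
  change _ ∧ (π ++ [w]).IsChain G.step ↔ (_ ∧ π.IsChain G.step) ∧ _
  simp only [List.isChain_append, List.head?_append_of_ne_nil _ hπ,
    List.isChain_singleton, List.head?_singleton, Option.mem_some_iff, forall_eq', true_and,
    and_assoc]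

lemma obsSeq_append_singleton (i : Fin n) {π : List V} (hπ : π ≠ []) (w : V) :
    G.obsSeq i (π ++ [w]) = G.obsSeq i π ++ [G.obs i w] := by
  rw [obsSeq, List.drop_append_of_le_length (List.length_pos_iff.mpr hπ), List.map_append,
    List.map_singleton, obsSeq]

lemma indist_append_singleton_iff (i : Fin n) {π π' : List V} (hπ : π ≠ []) (hπ' : π' ≠ [])
    (w w' : V) :
    G.Indist i (π ++ [w]) (π' ++ [w']) ↔ G.Indist i π π' ∧ G.obs i w = G.obs i w' := by
  rw [Indist, G.obsSeq_append_singleton i hπ, G.obsSeq_append_singleton i hπ',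
    List.append_singleton_inj, Indist]

lemma indist_singleton (i : Fin n) (w w' : V) : G.Indist i [w] [w'] := by
  simp [Indist, obsSeq]

lemma infoSet_singleton (i : Fin n) (w : V) : G.InfoSet i [w] = {[G.init]} := by
  ext π'
  constructor
  · rintro ⟨hH, hI⟩
    have hlen : π'.length = 1 := by
      have := hI.length_eq_s12
      have := List.length_pos_iff.mpr hH.ne_nil_s12
      simp only [List.length_singleton] at *
      omega
    obtain ⟨x, rfl⟩ := List.length_eq_one_iff.mp hlen
    simpa [IsHistory] using hH.1
  · rintro rfl
    exact ⟨⟨rfl, List.isChain_singleton _⟩, G.indist_singleton i w G.init⟩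

lemma exists_eq_append_singleton_of_indist (i : Fin n) {π π'' : List V} (hπ : π ≠ [])
    (hπ'' : π'' ≠ []) (w : V) (h : G.Indist i (π ++ [w]) π'') :
    ∃ π' v, π'' = π' ++ [v] ∧ π' ≠ [] := by
  refine ⟨π''.dropLast, π''.getLast hπ'', (List.dropLast_append_getLast hπ'').symm, ?_⟩
  have := h.length_eq_s12
  have := List.length_pos_iff.mpr hπ
  rw [← List.length_pos_iff, List.length_dropLast]
  simp only [List.length_append, List.length_singleton] at *
  omega

def infoTrace (π : List V) (i j : Fin n) : Set (V × Bool) :=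
  { p | ∃ π' ∈ G.InfoSet i π, p.1 ∈ π'.getLast? ∧ (p.2 = true ↔ G.Indist j π π') }

lemma infoSet_subset_iff_infoTrace (π : List V) (i j : Fin n) :
    G.InfoSet i π ⊆ G.InfoSet j π ↔ ∀ v, (v, false) ∉ G.infoTrace π i j := by
  constructor
  · rintro hsub v ⟨π', hπ', -, hb⟩
    simpa using hb.mpr (hsub hπ').2
  · intro h π' hπ'
    refine ⟨hπ'.1, by_contra fun hj => h ((π'.getLast hπ'.1.ne_nil_s12)) ⟨π', hπ', ?_, ?_⟩⟩
    · exact List.getLast?_eq_some_getLast hπ'.1.ne_nil_s12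
    · simpa using hj

lemma histHI_iff_infoTrace (π : List V) :
    G.HistHI π ↔ ∀ i j, (∀ v, (v, false) ∉ G.infoTrace π i j) ∨
      (∀ v, (v, false) ∉ G.infoTrace π j i) := by
  simp only [HistHI, infoSet_subset_iff_infoTrace]

lemma infoTrace_singleton (w : V) (i j : Fin n) : G.infoTrace [w] i j = {(G.init, true)} := by
  ext ⟨v, b⟩
  simp only [infoTrace, infoSet_singleton, Set.mem_singleton_iff, exists_eq_left,
    List.getLast?_singleton, Option.mem_some_iff, iff_true_intro (G.indist_singleton j w _),
    iff_true, Set.mem_ofPred_eq, Prod.mk.injEq, eq_comm]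

lemma infoTrace_self_nonempty {π : List V} (hπ : G.IsHistory π) (i : Fin n) :
    (G.infoTrace π i i).Nonempty :=
  ⟨(π.getLast hπ.ne_nil_s12, true), π, ⟨hπ, rfl⟩,
    List.getLast?_eq_some_getLast hπ.ne_nil_s12, iff_of_true rfl rfl⟩

def infoTraceStep (S : Fin n → Fin n → Set (V × Bool)) (w : V) :
    Fin n → Fin n → Set (V × Bool) :=
  fun i j => { p | ∃ q ∈ S i j, G.step q.1 p.1 ∧ G.obs i p.1 = G.obs i w ∧
    (p.2 = true ↔ q.2 = true ∧ G.obs j p.1 = G.obs j w) }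

lemma infoTrace_append_singleton {π : List V} (hπ : π ≠ []) (w : V) :
    G.infoTrace (π ++ [w]) = G.infoTraceStep (G.infoTrace π) w := by
  classical
  ext i j ⟨v', b'⟩
  dsimp only [infoTrace, infoTraceStep, Set.mem_ofPred_eq]
  constructor
  · rintro ⟨π'', ⟨hH, hI⟩, hv', hb'⟩
    obtain ⟨π', x, rfl, hπ'⟩ := G.exists_eq_append_singleton_of_indist i hπ hH.ne_nil_s12 w hI
    obtain rfl : x = v' := by simpa using hv'
    rw [G.isHistory_append_singleton_iff hπ' x] at hH
    rw [G.indist_append_singleton_iff i hπ hπ'] at hI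
    rw [G.indist_append_singleton_iff j hπ hπ'] at hb'
    obtain ⟨u, hu⟩ := Option.ne_none_iff_exists'.mp (List.getLast?_eq_none_iff.not.mpr hπ')
    refine ⟨(u, decide (G.Indist j π π')), ⟨π', ⟨hH.1, hI.1⟩, hu, by simp⟩,
      hH.2 u hu, hI.2.symm, ?_⟩
    simpa [eq_comm] using hb'
  · rintro ⟨⟨u, b⟩, ⟨π', ⟨hH, hI⟩, hu, hb⟩, hstep, hobs, hb'⟩
    have hπ' := hH.ne_nil_s12
    refine ⟨π' ++ [v'], ⟨(G.isHistory_append_singleton_iff hπ' v').mpr ⟨hH, ?_⟩, ?_⟩, by simp, ?_⟩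
    · intro x hx
      obtain rfl : x = u := Option.mem_unique hx hu
      exact hstep
    · exact (G.indist_append_singleton_iff i hπ hπ' w v').mpr ⟨hI, hobs.symm⟩
    · rw [hb', G.indist_append_singleton_iff j hπ hπ', ← hb]
      exact and_congr_right' eq_comm

-- The initial state `fun _ _ => ∅` encodes the empty prefix, read before the initial position.
open Classical in
noncomputable def hiAutomaton : DetBuchi V (Fin n → Fin n → Set (V × Bool)) where
  q0 := fun _ _ => ∅
  δ S w := if S = fun _ _ => ∅ then fun _ _ => {(G.init, true)} else G.infoTraceStep S w
  accept := { S | ∀ i j, (∀ v, (v, false) ∉ S i j) ∨ (∀ v, (v, false) ∉ S j i) }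

lemma playPrefix_succ (f : ℕ → V) (t : ℕ) :
    playPrefix f (t + 1) = playPrefix f t ++ [f (t + 1)] := by
  simp [playPrefix, List.range_succ]

lemma hiAutomaton_run_succ {f : ℕ → V} (hf : G.IsPlay f) (t : ℕ) :
    G.hiAutomaton.run f (t + 1) = G.infoTrace (playPrefix f t) := by
  induction t with
  | zero =>
    ext i j
    simp [DetBuchi.run, hiAutomaton, playPrefix, infoTrace_singleton]
  | succ t ih =>
    rw [playPrefix_succ, G.infoTrace_append_singleton (hf t).ne_nil_s12]
    change G.hiAutomaton.δ (G.hiAutomaton.run f (t + 1)) (f (t + 1)) = _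
    rw [ih]
    by_cases h : G.infoTrace (playPrefix f t) = fun _ _ => ∅
    · -- only possible without players, since `infoTrace π i i` is never empty
      funext i
      have := G.infoTrace_self_nonempty (hf t) i
      simp [h] at this
    · simp [hiAutomaton, h]

lemma hiAutomaton_accepts_iff {f : ℕ → V} (hf : G.IsPlay f) :
    G.hiAutomaton.Accepts f ↔ G.PlayRecurringHI f := by
  simp only [DetBuchi.accepts_iff_frequently_run_succ, hiAutomaton_run_succ G hf,
    PlayRecurringHI, histHI_iff_infoTrace, Filter.frequently_atTop]
  rfl

end GameGraph

theorem statement12_general {n : ℕ} {V : Type} {A B : Fin n → Type}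
    [Fintype V] (G : GameGraph n V A B) :
    ∃ (m : ℕ) (aut : DetBuchi V (Fin m)),
      m ≤ Fintype.card V * 2 ^ (2 * n ^ 2 * Fintype.card V ^ 2) ∧
      ∀ f : ℕ → V, G.IsPlay f → (aut.Accepts f ↔ G.PlayRecurringHI f) := by
  classical
  let σ := Fin n → Fin n → Set (V × Bool)
  have hV : 1 ≤ Fintype.card V := Fintype.card_pos_iff.mpr ⟨G.init⟩
  refine ⟨Fintype.card σ, G.hiAutomaton.mapEquiv (Fintype.equivFin σ), ?_, fun f hf =>
    (DetBuchi.accepts_mapEquiv _ _ f).trans (G.hiAutomaton_accepts_iff hf)⟩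
  calc Fintype.card σ = 2 ^ (2 * n ^ 2 * Fintype.card V) := by
        simp only [σ, Fintype.card_pi, Fintype.card_set, Fintype.card_prod, Fintype.card_bool,
          Finset.prod_const, Finset.card_univ, Fintype.card_fin, ← pow_mul]
        ring_nf
    _ ≤ 2 ^ (2 * n ^ 2 * Fintype.card V ^ 2) :=
        Nat.pow_le_pow_right two_pos (Nat.mul_le_mul_left _ (Nat.le_self_pow two_ne_zero _))
    _ ≤ Fintype.card V * 2 ^ (2 * n ^ 2 * Fintype.card V ^ 2) := Nat.le_mul_of_pos_left _ hV

/-- For every finite game graph with `n` players and `|V|` positions there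
is a deterministic Büchi automaton over alphabet `V` with at most `|V| · 2^(2n²|V|²)` states
that accepts exactly those plays that yield recurring hierarchical information. -/
theorem statement12 {n : ℕ} {V : Type} {A B : Fin n → Type}
    [Fintype V] [∀ i, Fintype (A i)] [∀ i, Fintype (B i)]
    (G : GameGraph n V A B) :
    ∃ (m : ℕ) (aut : DetBuchi V (Fin m)),
      m ≤ Fintype.card V * 2 ^ (2 * n ^ 2 * Fintype.card V ^ 2) ∧
      ∀ f : ℕ → V, G.IsPlay f → (aut.Accepts f ↔ G.PlayRecurringHI f) :=
  statement12_general G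
end
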